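/- arXiv:2604.19188 — 2 statements merged into one kernel-verified Lean document; each statement's English description precedes it below -/
import Mathlib

section
/- Let n ≥ 1 and let U ⊆ ℝⁿ be open. Let P₀, P₁ : U → Mat_n(ℝ) be smooth maps taking skew-symmetric values such that the coordinate Schouten brackets satisfy [P₀,P₀] = 0, [P₁,P₁] = 0 and [P₀,P₁] = 0 identically on U, and such that P₀(z) is invertible for every z ∈ U. Then the matrix-valued map N := P₁·P₀⁻¹ has identically vanishing coordinate Nijenhuis torsion on U; that is, N is a torsionless (Nijenhuis) recursion operator. -/
open Matrix

/-- Partial derivative `∂f/∂z^l` at `z`. -/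
noncomputable def pd {n : ℕ} (l : Fin n) (f : (Fin n → ℝ) → ℝ) (z : Fin n → ℝ) : ℝ :=
  fderiv ℝ f z (Pi.single l 1)

/-- Coordinate Schouten bracket of two (skew-symmetric) matrix-valued maps. -/
noncomputable def schouten {n : ℕ} (P Q : (Fin n → ℝ) → Matrix (Fin n) (Fin n) ℝ)
    (z : Fin n → ℝ) (i j k : Fin n) : ℝ :=
  ∑ l, (P z l i * pd l (fun w => Q w j k) z + Q z l i * pd l (fun w => P w j k) z
      + P z l j * pd l (fun w => Q w k i) z + Q z l j * pd l (fun w => P w k i) z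
      + P z l k * pd l (fun w => Q w i j) z + Q z l k * pd l (fun w => P w i j) z)

/-- Coordinate Nijenhuis torsion of a matrix-valued map. -/
noncomputable def nijenhuis {n : ℕ} (N : (Fin n → ℝ) → Matrix (Fin n) (Fin n) ℝ)
    (z : Fin n → ℝ) (i j k : Fin n) : ℝ :=
  ∑ l, (N z l j * pd l (fun w => N w i k) z - N z l k * pd l (fun w => N w i j) z
      - N z i l * pd j (fun w => N w l k) z + N z i l * pd k (fun w => N w l j) z)

/-!
Contracting the `i`-th slice of the Nijenhuis torsion `T` of `N = P₁ P₀⁻¹` with `P₀` on both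
sides gives, pointwise,
`(P₀ᵀ T^i P₀)_{ab} = -½[P₁,P₁]^{iab} + N^i_m [P₀,P₁]^{mab} - ½(N²)^i_m [P₀,P₀]^{mab}`.
Only three facts enter: the product rule `(∂N) P₀ = ∂P₁ - N ∂P₀`, the identity `P₁ = P₀ Nᵀ`
forced by skew-symmetry (so a contraction with `P₁` is a contraction with `P₀` followed by `N`),
and skew-symmetry of the derivatives, which turns the antisymmetrisation in `a, b` into cyclic
sums. Since `P₀` is invertible, vanishing brackets force `T = 0`.
-/

open Filter Topology

section Calculus

variable {n : ℕ}

lemma pd_congr {l : Fin n} {f g : (Fin n → ℝ) → ℝ} {z : Fin n → ℝ} (h : f =ᶠ[𝓝 z] g) :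
    pd l f z = pd l g z := by
  rw [pd, pd, h.fderiv_eq]

lemma pd_neg (l : Fin n) (f : (Fin n → ℝ) → ℝ) (z : Fin n → ℝ) :
    pd l (fun w => -f w) z = -pd l f z := by
  simp [pd, fderiv_fun_neg]

lemma pd_sum {ι : Type*} (s : Finset ι) {l : Fin n} {F : ι → (Fin n → ℝ) → ℝ} {z : Fin n → ℝ}
    (h : ∀ m ∈ s, DifferentiableAt ℝ (F m) z) :
    pd l (fun w => ∑ m ∈ s, F m w) z = ∑ m ∈ s, pd l (F m) z := by
  simp [pd, fderiv_fun_sum h]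

lemma pd_mul {l : Fin n} {f g : (Fin n → ℝ) → ℝ} {z : Fin n → ℝ}
    (hf : DifferentiableAt ℝ f z) (hg : DifferentiableAt ℝ g z) :
    pd l (fun w => f w * g w) z = pd l f z * g z + f z * pd l g z := by
  simp only [pd, fderiv_fun_mul hf hg, _root_.add_apply, _root_.smul_apply, smul_eq_mul]
  ring

lemma differentiableAt_det {M : (Fin n → ℝ) → Matrix (Fin n) (Fin n) ℝ} {z : Fin n → ℝ}
    (hM : ∀ a b, DifferentiableAt ℝ (fun w => M w a b) z) :
    DifferentiableAt ℝ (fun w => (M w).det) z := by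
  simp only [det_apply']
  fun_prop

lemma differentiableAt_inv_apply {M : (Fin n → ℝ) → Matrix (Fin n) (Fin n) ℝ} {z : Fin n → ℝ}
    (hM : ∀ a b, DifferentiableAt ℝ (fun w => M w a b) z) (hz : IsUnit (M z).det) (a b : Fin n) :
    DifferentiableAt ℝ (fun w => (M w)⁻¹ a b) z := by
  have hupdate : ∀ r s, DifferentiableAt ℝ
      (fun w => (M w).updateRow b (Pi.single a 1) r s) z := by
    intro r s
    by_cases hr : r = b <;> simp [updateRow_apply, hr, hM]
  simp only [inv_def, Matrix.smul_apply, Ring.inverse_eq_inv, smul_eq_mul, adjugate_apply]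
  exact ((differentiableAt_det hM).inv hz.ne_zero).mul (differentiableAt_det hupdate)

lemma differentiableAt_mul_apply {A B : (Fin n → ℝ) → Matrix (Fin n) (Fin n) ℝ}
    {z : Fin n → ℝ} (hA : ∀ a b, DifferentiableAt ℝ (fun w => A w a b) z)
    (hB : ∀ a b, DifferentiableAt ℝ (fun w => B w a b) z) (a b : Fin n) :
    DifferentiableAt ℝ (fun w => (A w * B w) a b) z := by
  simp only [mul_apply]
  fun_prop

noncomputable def pdMat (P : (Fin n → ℝ) → Matrix (Fin n) (Fin n) ℝ) (z : Fin n → ℝ) (l : Fin n) :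
    Matrix (Fin n) (Fin n) ℝ :=
  of fun a b => pd l (fun w => P w a b) z

lemma pdMat_congr {A B : (Fin n → ℝ) → Matrix (Fin n) (Fin n) ℝ} {z : Fin n → ℝ}
    (h : A =ᶠ[𝓝 z] B) : pdMat A z = pdMat B z := by
  ext l a b
  exact pd_congr (h.mono fun w hw => congr_fun₂ hw a b)

lemma pdMat_transpose {P : (Fin n → ℝ) → Matrix (Fin n) (Fin n) ℝ} {z : Fin n → ℝ}
    (h : ∀ᶠ w in 𝓝 z, (P w)ᵀ = -P w) (l : Fin n) : (pdMat P z l)ᵀ = -pdMat P z l := by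
  ext a b
  rw [transpose_apply, Matrix.neg_apply, pdMat, of_apply, of_apply, ← pd_neg]
  exact pd_congr (h.mono fun w hw => by simpa using congr_fun₂ hw a b)

lemma pdMat_mul {A B : (Fin n → ℝ) → Matrix (Fin n) (Fin n) ℝ} {z : Fin n → ℝ}
    (hA : ∀ a b, DifferentiableAt ℝ (fun w => A w a b) z)
    (hB : ∀ a b, DifferentiableAt ℝ (fun w => B w a b) z) (l : Fin n) :
    pdMat (fun w => A w * B w) z l = pdMat A z l * B z + A z * pdMat B z l := by
  ext a b
  simp only [pdMat, of_apply, Matrix.add_apply, mul_apply, ← Finset.sum_add_distrib]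
  rw [pd_sum (F := fun m w => A w a m * B w m b) _ fun m _ => (hA a m).mul (hB m b)]
  exact Finset.sum_congr rfl fun m _ => pd_mul (hA a m) (hB m b)

end Calculus

section Algebra

variable {ι R : Type*}

def cyclicSum [Add R] (S : ι → ι → ι → R) (a b c : ι) : R :=
  S a b c + S b c a + S c a b

lemma sub_swap_eq_sub_cyclicSum [AddCommGroup R] {S : ι → ι → ι → R}
    (hS : ∀ x y z, S x y z = -S x z y) (a m b : ι) :
    S a m b - S b m a = S m a b - cyclicSum S m a b := by
  rw [cyclicSum, hS a m b, hS b m a]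
  abel

variable [Fintype ι] [CommRing R]

def schoutenTerm (A : Matrix ι ι R) (dB : ι → Matrix ι ι R) (a b c : ι) : R :=
  ∑ l, A l a * dB l b c

lemma schoutenTerm_swap {A : Matrix ι ι R} {dB : ι → Matrix ι ι R}
    (hB : ∀ l, (dB l)ᵀ = -dB l) (a b c : ι) :
    schoutenTerm A dB a b c = -schoutenTerm A dB a c b := by
  rw [schoutenTerm, schoutenTerm, ← Finset.sum_neg_distrib]
  refine Finset.sum_congr rfl fun l _ => ?_
  rw [← transpose_apply (dB l) c b, hB, Matrix.neg_apply, mul_neg]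

lemma schoutenTerm_sub (A : Matrix ι ι R) (D E : ι → Matrix ι ι R) (a b c : ι) :
    schoutenTerm A (fun l => D l - E l) a b c = schoutenTerm A D a b c - schoutenTerm A E a b c := by
  simp only [schoutenTerm, Matrix.sub_apply, mul_sub, Finset.sum_sub_distrib]

lemma schoutenTerm_mul_left (A M : Matrix ι ι R) (D : ι → Matrix ι ι R) (a i b : ι) :
    schoutenTerm A (fun l => M * D l) a i b = ∑ m, M i m * schoutenTerm A D a m b := by
  simp only [schoutenTerm, mul_apply, Finset.mul_sum]
  rw [Finset.sum_comm]
  exact Finset.sum_congr rfl fun _ _ => Finset.sum_congr rfl fun _ _ => by ring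

lemma schoutenTerm_mul_transpose (A M : Matrix ι ι R) (D : ι → Matrix ι ι R) (i b c : ι) :
    schoutenTerm (A * Mᵀ) D i b c = ∑ m, M i m * schoutenTerm A D m b c := by
  simp only [schoutenTerm, mul_apply, transpose_apply, Finset.mul_sum, Finset.sum_mul]
  rw [Finset.sum_comm]
  exact Finset.sum_congr rfl fun _ _ => Finset.sum_congr rfl fun _ _ => by ring

def rowStack (D : ι → Matrix ι ι R) (i : ι) : Matrix ι ι R :=
  of fun l k => D l i k

lemma rowStack_mul (D : ι → Matrix ι ι R) (i : ι) (M : Matrix ι ι R) :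
    rowStack D i * M = rowStack (fun l => D l * M) i := by
  ext
  simp [rowStack, mul_apply]

lemma transpose_mul_rowStack_apply (M : Matrix ι ι R) (D : ι → Matrix ι ι R) (i a b : ι) :
    (Mᵀ * rowStack D i) a b = schoutenTerm M D a i b := by
  simp [mul_apply, rowStack, schoutenTerm]

def torsionAt (N : Matrix ι ι R) (ν : ι → Matrix ι ι R) (i : ι) : Matrix ι ι R :=
  of fun j k => ∑ l, (N l j * ν l i k - N l k * ν l i j - N i l * ν j l k + N i l * ν k l j)

lemma torsionAt_eq (N : Matrix ι ι R) (ν : ι → Matrix ι ι R) (i : ι) :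
    let W := Nᵀ * rowStack ν i - rowStack (fun l => N * ν l) i
    torsionAt N ν i = W - Wᵀ := by
  ext j k
  simp only [torsionAt, rowStack, mul_apply, transpose_apply, of_apply, Matrix.sub_apply,
    Finset.sum_sub_distrib, Finset.sum_add_distrib]
  ring

lemma transpose_mul_torsionAt_mul_apply (Q N : Matrix ι ι R) (ν : ι → Matrix ι ι R)
    (i a b : ι) :
    (Qᵀ * torsionAt N ν i * Q) a b =
      (schoutenTerm (N * Q) (fun l => ν l * Q) a i b - schoutenTerm Q (fun l => N * ν l * Q) a i b)
      - (schoutenTerm (N * Q) (fun l => ν l * Q) b i a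
        - schoutenTerm Q (fun l => N * ν l * Q) b i a) := by
  set W := Nᵀ * rowStack ν i - rowStack (fun l => N * ν l) i
  have hW : Qᵀ * W * Q
      = (N * Q)ᵀ * rowStack (fun l => ν l * Q) i - Qᵀ * rowStack (fun l => N * ν l * Q) i := by
    simp only [W, Matrix.mul_sub, Matrix.sub_mul, transpose_mul, Matrix.mul_assoc, rowStack_mul]
  have hWt : Qᵀ * Wᵀ * Q = (Qᵀ * W * Q)ᵀ := by
    simp only [transpose_mul, transpose_transpose, Matrix.mul_assoc]
  rw [torsionAt_eq, Matrix.mul_sub, Matrix.sub_mul, hWt, hW]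
  simp only [Matrix.sub_apply, transpose_apply, transpose_mul_rowStack_apply]

lemma mul_transpose_eq_of_skew {Q P N : Matrix ι ι R} (hQ : Qᵀ = -Q) (hP : Pᵀ = -P)
    (hNQ : N * Q = P) : Q * Nᵀ = P := by
  rw [← neg_neg P, ← hP, ← hNQ, transpose_mul, hQ, Matrix.neg_mul, neg_neg]

lemma transpose_mul_torsionAt_mul_apply_of_mul_eq {Q P N : Matrix ι ι R}
    {q p ν : ι → Matrix ι ι R} (hNQ : N * Q = P) (hν : ∀ l, ν l * Q = p l - N * q l)
    (i a b : ι) :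
    (Qᵀ * torsionAt N ν i * Q) a b =
      (schoutenTerm P p a i b - schoutenTerm P p b i a)
        - ∑ m, N i m * ((schoutenTerm Q p + schoutenTerm P q) a m b
          - (schoutenTerm Q p + schoutenTerm P q) b m a)
        + ∑ m, (N * N) i m * (schoutenTerm Q q a m b - schoutenTerm Q q b m a) := by
  have hNν : ∀ l, N * ν l * Q = N * p l - N * N * q l := fun l => by
    rw [Matrix.mul_assoc, hν, Matrix.mul_sub, Matrix.mul_assoc]
  rw [transpose_mul_torsionAt_mul_apply]
  simp only [hNQ, hν, hNν, schoutenTerm_sub, schoutenTerm_mul_left, Pi.add_apply, mul_add, mul_sub,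
    Finset.sum_add_distrib, Finset.sum_sub_distrib]
  ring

theorem transpose_mul_torsionAt_mul_apply_eq {Q P N : Matrix ι ι R}
    {q p ν : ι → Matrix ι ι R} (hQ : Qᵀ = -Q) (hP : Pᵀ = -P)
    (hq : ∀ l, (q l)ᵀ = -q l) (hp : ∀ l, (p l)ᵀ = -p l) (hNQ : N * Q = P)
    (hν : ∀ l, ν l * Q = p l - N * q l) (i a b : ι) :
    (Qᵀ * torsionAt N ν i * Q) a b =
      -cyclicSum (schoutenTerm P p) i a b
        + ∑ m, N i m * cyclicSum (schoutenTerm Q p + schoutenTerm P q) m a b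
        - ∑ m, (N * N) i m * cyclicSum (schoutenTerm Q q) m a b := by
  have hPQN := mul_transpose_eq_of_skew hQ hP hNQ
  have hPP : schoutenTerm P p i a b = ∑ m, N i m * schoutenTerm Q p m a b := by
    rw [← hPQN, schoutenTerm_mul_transpose]
  have hPQ : ∑ m, N i m * schoutenTerm P q m a b = ∑ m, (N * N) i m * schoutenTerm Q q m a b := by
    rw [← schoutenTerm_mul_transpose, ← schoutenTerm_mul_transpose, ← hPQN, transpose_mul,
      Matrix.mul_assoc]
  have skewQpPq : ∀ x y z, (schoutenTerm Q p + schoutenTerm P q) x y z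
      = -(schoutenTerm Q p + schoutenTerm P q) x z y := fun x y z => by
    simp only [Pi.add_apply, schoutenTerm_swap hq _ y, schoutenTerm_swap hp _ y]
    ring
  rw [transpose_mul_torsionAt_mul_apply_of_mul_eq hNQ hν]
  simp only [sub_swap_eq_sub_cyclicSum (schoutenTerm_swap hp),
    sub_swap_eq_sub_cyclicSum skewQpPq, sub_swap_eq_sub_cyclicSum (schoutenTerm_swap hq)]
  simp only [hPP, mul_sub, Finset.sum_sub_distrib, Pi.add_apply, mul_add, Finset.sum_add_distrib]
  linear_combination -hPQ

lemma Matrix.eq_zero_of_transpose_mul_mul_eq_zero [DecidableEq ι] {Q X : Matrix ι ι R} (hQ : IsUnit Q) (h : Qᵀ * X * Q = 0) : X = 0 :=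
  ((isUnit_transpose Q).2 hQ).mul_right_eq_zero.1 (hQ.mul_left_eq_zero.1 h)

end Algebra

section Brackets

variable {n : ℕ}

lemma schouten_eq_cyclicSum (P Q : (Fin n → ℝ) → Matrix (Fin n) (Fin n) ℝ) (z : Fin n → ℝ)
    (i j k : Fin n) :
    schouten P Q z i j k =
      cyclicSum (schoutenTerm (P z) (pdMat Q z) + schoutenTerm (Q z) (pdMat P z)) i j k := by
  simp only [schouten, cyclicSum, schoutenTerm, Pi.add_apply, pdMat, of_apply,
    Finset.sum_add_distrib]
  ring

lemma nijenhuis_eq_torsionAt (N : (Fin n → ℝ) → Matrix (Fin n) (Fin n) ℝ) (z : Fin n → ℝ)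
    (i j k : Fin n) : nijenhuis N z i j k = torsionAt (N z) (pdMat N z) i j k :=
  rfl

lemma cyclicSum_schoutenTerm_eq_zero {P : (Fin n → ℝ) → Matrix (Fin n) (Fin n) ℝ}
    {z : Fin n → ℝ} {i j k : Fin n} (h : schouten P P z i j k = 0) :
    cyclicSum (schoutenTerm (P z) (pdMat P z)) i j k = 0 := by
  rw [schouten_eq_cyclicSum] at h
  simp only [cyclicSum, Pi.add_apply] at h ⊢
  linarith

end Brackets

theorem recursion_operator_torsionless_general {n : ℕ}
    (U : Set (Fin n → ℝ)) (hU : IsOpen U)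
    (P₀ P₁ : (Fin n → ℝ) → Matrix (Fin n) (Fin n) ℝ)
    (hP₀smooth : ∀ i j, ContDiffOn ℝ (⊤ : ℕ∞) (fun z => P₀ z i j) U)
    (hP₁smooth : ∀ i j, ContDiffOn ℝ (⊤ : ℕ∞) (fun z => P₁ z i j) U)
    (hP₀skew : ∀ z ∈ U, (P₀ z)ᵀ = -P₀ z)
    (hP₁skew : ∀ z ∈ U, (P₁ z)ᵀ = -P₁ z)
    (h00 : ∀ z ∈ U, ∀ i j k, schouten P₀ P₀ z i j k = 0)
    (h11 : ∀ z ∈ U, ∀ i j k, schouten P₁ P₁ z i j k = 0)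
    (h01 : ∀ z ∈ U, ∀ i j k, schouten P₀ P₁ z i j k = 0)
    (hinv : ∀ z ∈ U, IsUnit (P₀ z)) :
    ∀ z ∈ U, ∀ i j k, nijenhuis (fun w => P₁ w * (P₀ w)⁻¹) z i j k = 0 := by
  intro z hz i j k
  set N := fun w => P₁ w * (P₀ w)⁻¹
  have hUz : U ∈ 𝓝 z := hU.mem_nhds hz
  have hdiff {P : (Fin n → ℝ) → Matrix (Fin n) (Fin n) ℝ}
      (h : ∀ i j, ContDiffOn ℝ (⊤ : ℕ∞) (fun z => P z i j) U) (a b : Fin n) :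
      DifferentiableAt ℝ (fun w => P w a b) z :=
    ((h a b).contDiffAt hUz).differentiableAt (by simp)
  have hskew {P : (Fin n → ℝ) → Matrix (Fin n) (Fin n) ℝ} (h : ∀ z ∈ U, (P z)ᵀ = -P z) :
      ∀ l, (pdMat P z l)ᵀ = -pdMat P z l :=
    pdMat_transpose (eventually_of_mem hUz h)
  have dN := differentiableAt_mul_apply (hdiff hP₁smooth)
    (differentiableAt_inv_apply (hdiff hP₀smooth) ((isUnit_iff_isUnit_det _).1 (hinv z hz)))
  have hNQ : ∀ᶠ w in 𝓝 z, N w * P₀ w = P₁ w := by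
    filter_upwards [hUz] with w hw
    exact nonsing_inv_mul_cancel_right _ _ ((isUnit_iff_isUnit_det _).1 (hinv w hw))
  have hν (l : Fin n) : pdMat N z l * P₀ z = pdMat P₁ z l - N z * pdMat P₀ z l := by
    rw [eq_sub_iff_add_eq, ← pdMat_mul dN (hdiff hP₀smooth), pdMat_congr hNQ]
  have hT : (P₀ z)ᵀ * torsionAt (N z) (pdMat N z) i * P₀ z = 0 := by
    ext a b
    rw [transpose_mul_torsionAt_mul_apply_eq (hP₀skew z hz) (hP₁skew z hz) (hskew hP₀skew)
      (hskew hP₁skew) hNQ.self_of_nhds hν]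
    simp only [cyclicSum_schoutenTerm_eq_zero (h00 z hz _ _ _),
      cyclicSum_schoutenTerm_eq_zero (h11 z hz _ _ _), ← schouten_eq_cyclicSum, h01 z hz,
      mul_zero, Finset.sum_const_zero, neg_zero, add_zero, sub_zero, Matrix.zero_apply]
  rw [nijenhuis_eq_torsionAt, eq_zero_of_transpose_mul_mul_eq_zero (hinv z hz) hT]
  rfl

/-- if `P₀, P₁` are smooth skew-symmetric compatible Poisson tensors on an open
set `U ⊆ ℝⁿ` with `P₀` invertible everywhere, then `N = P₁ · P₀⁻¹` has vanishing coordinate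
Nijenhuis torsion on `U`. -/
theorem recursion_operator_torsionless {n : ℕ} (hn : 1 ≤ n)
    (U : Set (Fin n → ℝ)) (hU : IsOpen U)
    (P₀ P₁ : (Fin n → ℝ) → Matrix (Fin n) (Fin n) ℝ)
    (hP₀smooth : ∀ i j, ContDiffOn ℝ (⊤ : ℕ∞) (fun z => P₀ z i j) U)
    (hP₁smooth : ∀ i j, ContDiffOn ℝ (⊤ : ℕ∞) (fun z => P₁ z i j) U)
    (hP₀skew : ∀ z ∈ U, (P₀ z)ᵀ = -P₀ z)
    (hP₁skew : ∀ z ∈ U, (P₁ z)ᵀ = -P₁ z)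
    (h00 : ∀ z ∈ U, ∀ i j k, schouten P₀ P₀ z i j k = 0)
    (h11 : ∀ z ∈ U, ∀ i j k, schouten P₁ P₁ z i j k = 0)
    (h01 : ∀ z ∈ U, ∀ i j k, schouten P₀ P₁ z i j k = 0)
    (hinv : ∀ z ∈ U, IsUnit (P₀ z)) :
    ∀ z ∈ U, ∀ i j k, nijenhuis (fun w => P₁ w * (P₀ w)⁻¹) z i j k = 0 :=
  recursion_operator_torsionless_general U hU P₀ P₁ hP₀smooth hP₁smooth hP₀skew hP₁skew h00 h11 h01
    hinv
end

section
/- The functions H_KK and K_KK are in involution with respect to the canonical Poisson bracket: {H_KK, K_KK}₀ = 0 at every point of ℝ⁴ with y ≠ 0. -/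
/-- Canonical Poisson bracket on ℝ⁴ with coordinates `(p_x, p_y, x, y)`:
`{f,g}₀ = f_x g_{p_x} − f_{p_x} g_x + f_y g_{p_y} − f_{p_y} g_y`. -/
noncomputable def pbracket (f g : ℝ → ℝ → ℝ → ℝ → ℝ) (px py x y : ℝ) : ℝ :=
    (deriv (fun t => f px py t y) x) * (deriv (fun t => g t py x y) px)
  - (deriv (fun t => f t py x y) px) * (deriv (fun t => g px py t y) x)
  + (deriv (fun t => f px py x t) y) * (deriv (fun t => g px t x y) py)
  - (deriv (fun t => f px t x y) py) * (deriv (fun t => g px py x t) y)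

/-- The Kaup–Kupershmidt Hamiltonian. -/
noncomputable def HKK (a ω μ : ℝ) (px py x y : ℝ) : ℝ :=
  (1/2) * (px^2 + py^2) + 8*ω*x^2 + (ω/2)*y^2 + a*x*y^2 + (16*a/3)*x^3 + μ/(2*y^2)

/-- The Kaup–Kupershmidt quartic integral. -/
noncomputable def KKK (a ω μ : ℝ) (px py x y : ℝ) : ℝ :=
  9*(ω*y^2 + py^2 + μ/y^2)^2 + 12*a*py*y^2*(3*x*py - y*px)
    - 2*a^2*y^4*(6*x^2 + y^2) + 12*a*x*(μ - ω*y^4) - 18*ω*μ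

/-!
Both functions are polynomial in `p_x, p_y, x` and in `y, y⁻¹`, so all eight partial derivatives
are explicit. Substituting them into the bracket and clearing the powers of `y` in the
denominators leaves a polynomial identity in `p_x, p_y, x, y, a, ω, μ`.
-/

theorem pbracket_eq_of_hasDerivAt {f g : ℝ → ℝ → ℝ → ℝ → ℝ}
    {px py x y fpx fpy fx fy gpx gpy gx gy : ℝ}
    (hfpx : HasDerivAt (fun t => f t py x y) fpx px)
    (hfpy : HasDerivAt (fun t => f px t x y) fpy py)
    (hfx : HasDerivAt (fun t => f px py t y) fx x)
    (hfy : HasDerivAt (fun t => f px py x t) fy y)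
    (hgpx : HasDerivAt (fun t => g t py x y) gpx px)
    (hgpy : HasDerivAt (fun t => g px t x y) gpy py)
    (hgx : HasDerivAt (fun t => g px py t y) gx x)
    (hgy : HasDerivAt (fun t => g px py x t) gy y) :
    pbracket f g px py x y = fx * gpx - fpx * gx + fy * gpy - fpy * gy := by
  rw [pbracket, hfpx.deriv, hfpy.deriv, hfx.deriv, hfy.deriv, hgpx.deriv, hgpy.deriv,
    hgx.deriv, hgy.deriv]

theorem hasDerivAt_const_div_sq (c : ℝ) {y : ℝ} (hy : y ≠ 0) :
    HasDerivAt (fun t => c / t ^ 2) (-2 * c / y ^ 3) y := by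
  refine ((hasDerivAt_const y c).div (hasDerivAt_pow 2 y) (pow_ne_zero 2 hy)).congr_deriv ?_
  field_simp
  ring

section partials

variable (a ω μ px py x y : ℝ)

theorem hasDerivAt_HKK_px : HasDerivAt (fun t => HKK a ω μ t py x y) px px :=
  (((((((hasDerivAt_pow 2 px).add_const (py ^ 2)).const_mul (1 / 2 : ℝ)).add_const
    (8 * ω * x ^ 2)).add_const ((ω / 2) * y ^ 2)).add_const (a * x * y ^ 2)).add_const
    ((16 * a / 3) * x ^ 3)).add_const (μ / (2 * y ^ 2)) |>.congr_deriv (by push_cast; ring)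

theorem hasDerivAt_HKK_py : HasDerivAt (fun t => HKK a ω μ px t x y) py py :=
  (((((((hasDerivAt_pow 2 py).const_add (px ^ 2)).const_mul (1 / 2 : ℝ)).add_const
    (8 * ω * x ^ 2)).add_const ((ω / 2) * y ^ 2)).add_const (a * x * y ^ 2)).add_const
    ((16 * a / 3) * x ^ 3)).add_const (μ / (2 * y ^ 2)) |>.congr_deriv (by push_cast; ring)

theorem hasDerivAt_HKK_x :
    HasDerivAt (fun t => HKK a ω μ px py t y) (16 * ω * x + a * y ^ 2 + 16 * a * x ^ 2) x :=
  (((((hasDerivAt_const x ((1 / 2 : ℝ) * (px ^ 2 + py ^ 2))).add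
    ((hasDerivAt_pow 2 x).const_mul (8 * ω))).add_const ((ω / 2) * y ^ 2)).add
    ((hasDerivAt_id' x).const_mul a |>.mul_const (y ^ 2))).add
    ((hasDerivAt_pow 3 x).const_mul (16 * a / 3))).add_const (μ / (2 * y ^ 2))
    |>.congr_deriv (by norm_num; ring)

theorem hasDerivAt_HKK_y (hy : y ≠ 0) :
    HasDerivAt (fun t => HKK a ω μ px py x t) (ω * y + 2 * a * x * y - μ / y ^ 3) y := by
  have h := ((((hasDerivAt_const y ((1 / 2 : ℝ) * (px ^ 2 + py ^ 2))).add_const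
    (8 * ω * x ^ 2)).add ((hasDerivAt_pow 2 y).const_mul (ω / 2))).add
    ((hasDerivAt_pow 2 y).const_mul (a * x))).add_const ((16 * a / 3) * x ^ 3) |>.add
    ((hasDerivAt_const y μ).div ((hasDerivAt_pow 2 y).const_mul 2) (by positivity))
  refine h.congr_deriv ?_
  field_simp
  ring

theorem hasDerivAt_KKK_px : HasDerivAt (fun t => KKK a ω μ t py x y) (-12 * a * py * y ^ 3) px :=
  ((((hasDerivAt_const px (9 * (ω * y ^ 2 + py ^ 2 + μ / y ^ 2) ^ 2)).add
    (((hasDerivAt_const px (3 * x * py)).sub ((hasDerivAt_id' px).const_mul y)).const_mul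
      (12 * a * py * y ^ 2))).sub_const (2 * a ^ 2 * y ^ 4 * (6 * x ^ 2 + y ^ 2))).add_const
    (12 * a * x * (μ - ω * y ^ 4))).sub_const (18 * ω * μ) |>.congr_deriv (by ring)

theorem hasDerivAt_KKK_py : HasDerivAt (fun t => KKK a ω μ px t x y)
    (36 * py * (ω * y ^ 2 + py ^ 2 + μ / y ^ 2) + 12 * a * y ^ 2 * (6 * x * py - y * px)) py :=
  ((((((((hasDerivAt_pow 2 py).const_add (ω * y ^ 2)).add_const (μ / y ^ 2)).pow 2).const_mul
    9).add
    ((((hasDerivAt_id' py).const_mul (12 * a)).mul_const (y ^ 2)).mul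
      (((hasDerivAt_id' py).const_mul (3 * x)).sub_const (y * px)))).sub_const
    (2 * a ^ 2 * y ^ 4 * (6 * x ^ 2 + y ^ 2))).add_const (12 * a * x * (μ - ω * y ^ 4))).sub_const
    (18 * ω * μ) |>.congr_deriv (by norm_num; ring)

theorem hasDerivAt_KKK_x : HasDerivAt (fun t => KKK a ω μ px py t y)
    (36 * a * py ^ 2 * y ^ 2 - 24 * a ^ 2 * x * y ^ 4 + 12 * a * μ - 12 * a * ω * y ^ 4) x :=
  ((((hasDerivAt_const x (9 * (ω * y ^ 2 + py ^ 2 + μ / y ^ 2) ^ 2)).add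
    (((((hasDerivAt_id' x).const_mul 3).mul_const py).sub_const (y * px)).const_mul
      (12 * a * py * y ^ 2))).sub
    ((((hasDerivAt_pow 2 x).const_mul 6).add_const (y ^ 2)).const_mul (2 * a ^ 2 * y ^ 4))).add
    (((hasDerivAt_id' x).const_mul (12 * a)).mul_const (μ - ω * y ^ 4))).sub_const (18 * ω * μ)
    |>.congr_deriv (by norm_num; ring)

theorem hasDerivAt_KKK_y (hy : y ≠ 0) : HasDerivAt (fun t => KKK a ω μ px py x t)
    (36 * (ω * y ^ 2 + py ^ 2 + μ / y ^ 2) * (ω * y - μ / y ^ 3)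
      + 12 * a * py * y * (6 * x * py - 3 * y * px)
      - 12 * a ^ 2 * y ^ 3 * (4 * x ^ 2 + y ^ 2) - 48 * a * ω * x * y ^ 3) y := by
  have hS :
      HasDerivAt (fun t => ω * t ^ 2 + py ^ 2 + μ / t ^ 2) (2 * ω * y - 2 * μ / y ^ 3) y :=
    (((hasDerivAt_pow 2 y).const_mul ω).add_const (py ^ 2)).fun_add
      (hasDerivAt_const_div_sq μ hy) |>.congr_deriv (by push_cast; ring)
  have h := ((((hS.fun_pow 2).const_mul 9).fun_add
    (((hasDerivAt_pow 2 y).const_mul (12 * a * py)).fun_mul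
      ((hasDerivAt_const y (3 * x * py)).fun_sub ((hasDerivAt_id' y).mul_const px)))).fun_sub
    (((hasDerivAt_pow 4 y).const_mul (2 * a ^ 2)).fun_mul
      ((hasDerivAt_pow 2 y).const_add (6 * x ^ 2)))).fun_add
    ((((hasDerivAt_pow 4 y).const_mul ω).const_sub μ).const_mul (12 * a * x)) |>.sub_const
    (18 * ω * μ)
  refine h.congr_deriv ?_
  norm_num
  field_simp
  ring

end partials

/-- `{H_KK, K_KK}₀ = 0` at every point with `y ≠ 0`. -/
theorem HKK_KKK_involution (a ω μ : ℝ) (px py x y : ℝ) (hy : y ≠ 0) :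
    pbracket (HKK a ω μ) (KKK a ω μ) px py x y = 0 := by
  rw [pbracket_eq_of_hasDerivAt (hasDerivAt_HKK_px ..) (hasDerivAt_HKK_py ..)
    (hasDerivAt_HKK_x ..) (hasDerivAt_HKK_y a ω μ px py x y hy) (hasDerivAt_KKK_px ..)
    (hasDerivAt_KKK_py ..) (hasDerivAt_KKK_x ..) (hasDerivAt_KKK_y a ω μ px py x y hy)]
  field_simp
  ring
end
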